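/- arXiv:2605.06575 — 2 statements merged into one kernel-verified Lean document; each statement's English description precedes it below -/
import Mathlib

section
/- Let α > 0 and define the real sequence y_0 = 3, y_{t+1} = y_t − 2α·tanh(y_t)/cosh(y_t)^2. Then for every natural number t with t ≤ 3·e^3/(16α), one has y_t ≥ 3/2. (Each step can decrease y by at most 8α·e^{−3} as long as y ≥ 3/2, so at least 3e^3/(16α) steps are needed to descend from 3 to 3/2.) -/
open Real

/- Since `cosh x ≥ eˣ/2` and `2 sinh x ≤ eˣ`, we get `2 sinh x / cosh³ x ≤ eˣ / (e^{3x}/8)`. -/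
lemma two_mul_tanh_div_cosh_sq_le (x : ℝ) :
    2 * tanh x / cosh x ^ 2 ≤ 8 * exp (-(2 * x)) := by
  have hcosh : exp x / 2 ≤ cosh x := by
    rw [cosh_eq]; linarith [exp_pos (-x)]
  have hsinh : 2 * sinh x ≤ exp x := by
    rw [sinh_eq]; linarith [exp_pos (-x)]
  have hcube : exp (-(2 * x)) * exp x ^ 3 = exp x := by
    rw [← exp_nat_mul, ← exp_add]; ring_nf
  have hrw : 2 * tanh x / cosh x ^ 2 = 2 * sinh x / cosh x ^ 3 := by
    rw [tanh_eq_sinh_div_cosh]; field_simp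
  rw [hrw, div_le_iff₀ (pow_pos (cosh_pos x) 3)]
  calc 2 * sinh x ≤ exp x := hsinh
    _ = 8 * exp (-(2 * x)) * (exp x / 2) ^ 3 := by linear_combination -hcube
    _ ≤ 8 * exp (-(2 * x)) * cosh x ^ 3 := by gcongr

lemma sub_natCast_mul_le_of_step_ge {y : ℕ → ℝ} {L δ : ℝ} (hδ : 0 ≤ δ)
    (hstep : ∀ t, L ≤ y t → y t - δ ≤ y (t + 1)) :
    ∀ t : ℕ, t * δ ≤ y 0 - L → y 0 - t * δ ≤ y t := by
  intro t
  induction t with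
  | zero => simp
  | succ t ih =>
    intro ht
    push_cast at ht ⊢
    have hyt := ih (by nlinarith)
    linarith [hstep t (by linarith)]

/-- Gradient descent with step `α > 0` on the scalar plateau profile `y ↦ tanh(y)^2`,
started at `y₀ = 3`, stays at or above `3/2` for every step `t ≤ 3 e^3 / (16 α)`. -/
theorem stmt4 (α : ℝ) (hα : 0 < α) (y : ℕ → ℝ)
    (h0 : y 0 = 3)
    (hrec : ∀ t, y (t + 1) = y t - 2 * α * Real.tanh (y t) / Real.cosh (y t) ^ 2) :
    ∀ t : ℕ, (t : ℝ) ≤ 3 * Real.exp 3 / (16 * α) → 3 / 2 ≤ y t := by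
  have hstep : ∀ t, 3 / 2 ≤ y t → y t - 8 * α * exp (-3) ≤ y (t + 1) := by
    intro t ht
    have hgrad : 2 * tanh (y t) / cosh (y t) ^ 2 ≤ 8 * exp (-3) :=
      (two_mul_tanh_div_cosh_sq_le (y t)).trans (by gcongr; linarith)
    have hdescent : 2 * α * tanh (y t) / cosh (y t) ^ 2 ≤ 8 * α * exp (-3) :=
      calc 2 * α * tanh (y t) / cosh (y t) ^ 2 = α * (2 * tanh (y t) / cosh (y t) ^ 2) := by ring
        _ ≤ α * (8 * exp (-3)) := by gcongr
        _ = 8 * α * exp (-3) := by ring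
    linarith [hrec t]
  have hbudget : 3 * exp 3 / (16 * α) * (8 * α * exp (-3)) = 3 - 3 / 2 := by
    rw [exp_neg]; field_simp; ring
  intro t ht
  have htδ : t * (8 * α * exp (-3)) ≤ y 0 - 3 / 2 := by
    rw [h0, ← hbudget]; gcongr
  linarith [sub_natCast_mul_le_of_step_ge (by positivity) hstep t htδ]
end

section
/- Let g = (a, b) and g' = (a', b') be nonzero vectors in ℝ^2, and let c > 1/√2 satisfy |b| ≥ c·‖g‖ and |b'| ≥ c·‖g'‖ (the second coordinate dominates both vectors). If b·b' < 0 (the dominant coordinate reverses sign), then the consecutive cosine similarity satisfies cc(g, g') = ⟨g, g'⟩/(‖g‖·‖g'‖) ≤ 1 − 2c^2 < 0. -/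
/-- Euclidean inner product on `ℝ × ℝ`. -/
def dot2 (g g' : ℝ × ℝ) : ℝ := g.1 * g'.1 + g.2 * g'.2

/-- Euclidean norm on `ℝ × ℝ`. -/
noncomputable def nrm2 (g : ℝ × ℝ) : ℝ := Real.sqrt (g.1 ^ 2 + g.2 ^ 2)

/-- **Consecutive cosine detects dominant-coordinate sign reversal.**  If `g, g'` are
nonzero vectors in `ℝ²`, `c > 1/√2`, the second coordinate dominates both
(`|b| ≥ c‖g‖`, `|b'| ≥ c‖g'‖`), and the dominant coordinate reverses sign
(`b·b' < 0`), then `cc(g, g') = ⟨g, g'⟩/(‖g‖‖g'‖) ≤ 1 − 2c² < 0`. -/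
theorem stmt9 (g g' : ℝ × ℝ) (c : ℝ)
    (hg : g ≠ 0) (hg' : g' ≠ 0)
    (hc : 1 / Real.sqrt 2 < c)
    (hb : c * nrm2 g ≤ |g.2|) (hb' : c * nrm2 g' ≤ |g'.2|)
    (hrev : g.2 * g'.2 < 0) :
    dot2 g g' / (nrm2 g * nrm2 g') ≤ 1 - 2 * c ^ 2 ∧ 1 - 2 * c ^ 2 < 0 := by
  have h2 : (0:ℝ) < Real.sqrt 2 := Real.sqrt_pos.mpr (by norm_num)
  have hc0 : 0 < c := lt_trans (by positivity) hc
  have hc2 : 1 / 2 < c ^ 2 := by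
    have hs : Real.sqrt 2 * Real.sqrt 2 = 2 := Real.mul_self_sqrt (by norm_num)
    have h12 : (1 / Real.sqrt 2) * (1 / Real.sqrt 2) = 1 / 2 := by
      rw [div_mul_div_comm, hs]; norm_num
    nlinarith [mul_lt_mul'' hc hc (by positivity) (by positivity)]
  have hN : 0 < nrm2 g := by
    apply Real.sqrt_pos.mpr
    have : g.1 ≠ 0 ∨ g.2 ≠ 0 := by
      by_contra hcon
      push_neg at hcon
      exact hg (Prod.ext hcon.1 hcon.2)
    rcases this with h | h <;> positivity
  have hN' : 0 < nrm2 g' := by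
    apply Real.sqrt_pos.mpr
    have : g'.1 ≠ 0 ∨ g'.2 ≠ 0 := by
      by_contra hcon
      push_neg at hcon
      exact hg' (Prod.ext hcon.1 hcon.2)
    rcases this with h | h <;> positivity
  have hNsq : (nrm2 g) ^ 2 = g.1 ^ 2 + g.2 ^ 2 := Real.sq_sqrt (by positivity)
  have hNsq' : (nrm2 g') ^ 2 = g'.1 ^ 2 + g'.2 ^ 2 := Real.sq_sqrt (by positivity)
  set N := nrm2 g
  set N' := nrm2 g'
  -- b² ≥ c² N²
  have hb2 : c ^ 2 * N ^ 2 ≤ g.2 ^ 2 := by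
    have := mul_le_mul hb hb (by positivity) (abs_nonneg _)
    rw [← abs_mul] at this
    calc c ^ 2 * N ^ 2 = (c * N) * (c * N) := by ring
      _ ≤ |g.2 * g.2| := this
      _ = g.2 ^ 2 := by rw [abs_mul_self]; ring
  have hb2' : c ^ 2 * N' ^ 2 ≤ g'.2 ^ 2 := by
    have := mul_le_mul hb' hb' (by positivity) (abs_nonneg _)
    rw [← abs_mul] at this
    calc c ^ 2 * N' ^ 2 = (c * N') * (c * N') := by ring
      _ ≤ |g'.2 * g'.2| := this
      _ = g'.2 ^ 2 := by rw [abs_mul_self]; ring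
  have ha2 : g.1 ^ 2 ≤ (1 - c ^ 2) * N ^ 2 := by nlinarith
  have ha2' : g'.1 ^ 2 ≤ (1 - c ^ 2) * N' ^ 2 := by nlinarith
  -- b b' ≤ -c² N N'
  have hbb : g.2 * g'.2 ≤ -(c ^ 2 * (N * N')) := by
    have h1 : c * N * (c * N') ≤ |g.2| * |g'.2| :=
      mul_le_mul hb hb' (by positivity) (abs_nonneg _)
    rw [← abs_mul, abs_of_neg hrev] at h1
    nlinarith
  have hdot : dot2 g g' ≤ (1 - 2 * c ^ 2) * (N * N') := by
    unfold dot2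
    nlinarith [sq_nonneg (g.1 * N' - g'.1 * N), mul_pos hN hN',
      mul_le_mul ha2 ha2' (sq_nonneg _) (by nlinarith)]
  constructor
  · rw [div_le_iff₀ (by positivity)]
    exact hdot
  · nlinarith
end
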